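/- Let θ ∈ (1, 2), fix λ_1 > 0 and n > 0, and for t > 0 consider the function f(t) = ∫₀^{λ_1} λ^{1-θ} / (1 + λ n / t) dλ. Then there exist constants 0 < c₁ ≤ c₂, depending only on θ and λ_1, such that for all t with t/n ≤ λ_1 we have c₁ (t/n)^{2-θ} ≤ f(t) ≤ c₂ (t/n)^{2-θ}. -/
import Mathlib

open Real MeasureTheory

/-- two-sided estimate for `f(t) = ∫₀^{λ₁} λ^{1-θ}/(1 + λ n / t) dλ`:
there are constants `0 < c₁ ≤ c₂` depending only on `θ, λ₁` such that whenever `t/n ≤ λ₁`,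
`c₁ (t/n)^{2-θ} ≤ f(t) ≤ c₂ (t/n)^{2-θ}`. -/
theorem stmt5 (θ lam1 : ℝ) (hθ1 : 1 < θ) (hθ2 : θ < 2) (hlam1 : 0 < lam1) :
    ∃ c₁ c₂ : ℝ, 0 < c₁ ∧ c₁ ≤ c₂ ∧
      ∀ n t : ℝ, 0 < n → 0 < t → t / n ≤ lam1 →
        (c₁ * (t / n) ^ (2 - θ) ≤ ∫ s in (0 : ℝ)..lam1, s ^ (1 - θ) / (1 + s * n / t)) ∧
        (∫ s in (0 : ℝ)..lam1, s ^ (1 - θ) / (1 + s * n / t)) ≤ c₂ * (t / n) ^ (2 - θ) := by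
  have h2θ : (0:ℝ) < 2 - θ := by linarith
  have hθ1' : (0:ℝ) < θ - 1 := by linarith
  refine ⟨1/(2*(2-θ)), 1/(2-θ) + 1/(θ-1), by positivity, ?_, ?_⟩
  · have h1 : 1/(2*(2-θ)) ≤ 1/(2-θ) := by
      rw [div_le_div_iff₀ (by positivity) (by positivity)]; nlinarith
    have h2 : (0:ℝ) ≤ 1/(θ-1) := by positivity
    linarith
  intro n t hn ht hle
  set a := t / n with ha_def
  have ha : 0 < a := by positivity
  have hAa : a ^ (2-θ) = a * a ^ (1-θ) := by
    rw [show (2-θ) = 1 + (1-θ) by ring, Real.rpow_add ha, Real.rpow_one]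
  -- integrability on subintervals of [0, lam1]
  have hint : ∀ p q : ℝ, p ∈ Set.Icc (0:ℝ) lam1 → q ∈ Set.Icc (0:ℝ) lam1 →
      IntervalIntegrable (fun s => s ^ (1 - θ) / (1 + s * n / t)) volume p q := by
    intro p q hp hq
    have h1 : IntervalIntegrable (fun s : ℝ => s ^ (1 - θ)) volume p q :=
      intervalIntegral.intervalIntegrable_rpow' (by linarith)
    have hsub : Set.uIcc p q ⊆ Set.Icc 0 lam1 :=
      (Set.ordConnected_Icc).uIcc_subset hp hq
    have h2 : ContinuousOn (fun s : ℝ => (1 + s * n / t)⁻¹) (Set.uIcc p q) := by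
      apply ContinuousOn.inv₀
      · fun_prop
      · intro x hx
        have hx0 : 0 ≤ x := (hsub hx).1
        have : 0 ≤ x * n / t := by positivity
        nlinarith
    simpa [div_eq_mul_inv] using h1.mul_continuousOn h2
  have hmem0 : (0:ℝ) ∈ Set.Icc (0:ℝ) lam1 := ⟨le_refl _, hlam1.le⟩
  have hmema : a ∈ Set.Icc (0:ℝ) lam1 := ⟨ha.le, hle⟩
  have hmemL : lam1 ∈ Set.Icc (0:ℝ) lam1 := ⟨hlam1.le, le_refl _⟩
  have hsplit : (∫ s in (0:ℝ)..a, s ^ (1 - θ) / (1 + s * n / t))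
      + (∫ s in a..lam1, s ^ (1 - θ) / (1 + s * n / t))
      = ∫ s in (0:ℝ)..lam1, s ^ (1 - θ) / (1 + s * n / t) :=
    intervalIntegral.integral_add_adjacent_intervals (hint 0 a hmem0 hmema)
      (hint a lam1 hmema hmemL)
  have hna : n / t = a⁻¹ := by
    rw [ha_def]; field_simp
  constructor
  · -- lower bound
    have h1 : (∫ s in (0:ℝ)..a, s ^ (1 - θ) / 2)
        ≤ ∫ s in (0:ℝ)..a, s ^ (1 - θ) / (1 + s * n / t) := by
      apply intervalIntegral.integral_mono_on ha.le
      · exact (intervalIntegral.intervalIntegrable_rpow' (by linarith)).div_const 2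
      · exact hint 0 a hmem0 hmema
      · intro x hx
        have hx0 : 0 ≤ x := hx.1
        have hx2 : 1 + x * n / t ≤ 2 := by
          have : x * n / t ≤ 1 := by
            rw [mul_div_assoc, hna]
            calc x * a⁻¹ ≤ a * a⁻¹ := by
                  apply mul_le_mul_of_nonneg_right hx.2 (by positivity)
              _ = 1 := mul_inv_cancel₀ ha.ne'
          linarith
        have hxpos : 0 < 1 + x * n / t := by
          have : 0 ≤ x * n / t := by positivity
          linarith
        gcongr
    have h2 : (0:ℝ) ≤ ∫ s in a..lam1, s ^ (1 - θ) / (1 + s * n / t) := by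
      apply intervalIntegral.integral_nonneg hle
      intro x hx
      have hx0 : 0 ≤ x := le_trans ha.le hx.1
      have : 0 ≤ x * n / t := by positivity
      positivity
    have hval : (∫ s in (0:ℝ)..a, s ^ (1 - θ) / 2) = a ^ (2-θ) / (2-θ) / 2 := by
      rw [intervalIntegral.integral_div, integral_rpow (Or.inl (by linarith))]
      rw [show (1-θ)+1 = 2-θ by ring, Real.zero_rpow (by linarith : (2:ℝ)-θ ≠ 0)]
      ring
    have : a ^ (2-θ) / (2-θ) / 2 ≤ ∫ s in (0:ℝ)..lam1, s ^ (1 - θ) / (1 + s * n / t) := by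
      rw [← hsplit]
      calc a ^ (2-θ) / (2-θ) / 2 = ∫ s in (0:ℝ)..a, s ^ (1 - θ) / 2 := hval.symm
        _ ≤ _ := by linarith
    have hc : 1/(2*(2-θ)) * a ^ (2-θ) = a ^ (2-θ) / (2-θ) / 2 := by
      rw [div_div, mul_comm 2 (2-θ), one_div_mul_eq_div]
    linarith [hc, this]
  · -- upper bound
    have h1 : (∫ s in (0:ℝ)..a, s ^ (1 - θ) / (1 + s * n / t))
        ≤ ∫ s in (0:ℝ)..a, s ^ (1 - θ) := by
      apply intervalIntegral.integral_mono_on ha.le (hint 0 a hmem0 hmema)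
        (intervalIntegral.intervalIntegrable_rpow' (by linarith))
      intro x hx
      have hx0 : 0 ≤ x := hx.1
      have hd : (1:ℝ) ≤ 1 + x * n / t := by
        have : 0 ≤ x * n / t := by positivity
        linarith
      calc x ^ (1-θ) / (1 + x * n / t) ≤ x ^ (1-θ) / 1 := by
            gcongr
        _ = x ^ (1-θ) := div_one _
    have hv1 : (∫ s in (0:ℝ)..a, s ^ (1 - θ)) = a ^ (2-θ) / (2-θ) := by
      rw [integral_rpow (Or.inl (by linarith))]
      rw [show (1-θ)+1 = 2-θ by ring, Real.zero_rpow (by linarith : (2:ℝ)-θ ≠ 0)]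
      ring
    have h2 : (∫ s in a..lam1, s ^ (1 - θ) / (1 + s * n / t))
        ≤ ∫ s in a..lam1, a * s ^ (-θ) := by
      apply intervalIntegral.integral_mono_on hle (hint a lam1 hmema hmemL)
      · exact (intervalIntegral.intervalIntegrable_rpow
          (Or.inr (by
            intro h
            have := Set.mem_Icc.mp (by simpa [Set.uIcc_of_le hle] using h)
            linarith [this.1]))).const_mul a
      · intro x hx
        have hx0 : 0 < x := lt_of_lt_of_le ha hx.1
        have hxa : x / a ≤ 1 + x * n / t := by
          rw [mul_div_assoc, hna]
          have : x * a⁻¹ = x / a := by ring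
          rw [this]; linarith
        have hxapos : 0 < x / a := by positivity
        calc x ^ (1-θ) / (1 + x * n / t) ≤ x ^ (1-θ) / (x / a) := by
              gcongr
          _ = a * x ^ (-θ) := by
              have hxθ : x ^ (-θ) = x ^ (1-θ) / x := by
                rw [show (-θ) = (1-θ) - 1 by ring, Real.rpow_sub hx0, Real.rpow_one]
              rw [div_div_eq_mul_div, hxθ]
              ring
    have hv2 : (∫ s in a..lam1, a * s ^ (-θ)) ≤ a ^ (2-θ) / (θ-1) := by
      rw [intervalIntegral.integral_const_mul, integral_rpow (Or.inr ⟨by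
          intro h; exact absurd h (by norm_num; linarith), by
          intro h
          have := Set.mem_Icc.mp (by simpa [Set.uIcc_of_le hle] using h)
          linarith [this.1]⟩)]
      have hL : 0 ≤ lam1 ^ (1-θ) := Real.rpow_nonneg hlam1.le _
      have hneg : ∀ X Y : ℝ, (X - Y) / (1-θ) = (Y - X) / (θ-1) := by
        intro X Y
        rw [show θ-1 = -(1-θ) by ring, show Y-X = -(X-Y) by ring, neg_div_neg_eq]
      have key : a * ((lam1 ^ (-θ+1) - a ^ (-θ+1)) / (-θ+1))
          = a * (a ^ (1-θ) - lam1 ^ (1-θ)) / (θ-1) := by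
        rw [show -θ+1 = 1-θ by ring, hneg]
        ring
      rw [key, hAa]
      rw [div_le_div_iff₀ hθ1' hθ1']
      have hA : 0 ≤ a ^ (1-θ) := Real.rpow_nonneg ha.le _
      nlinarith [mul_nonneg (mul_nonneg ha.le hL) hθ1'.le]
    rw [← hsplit]
    calc (∫ s in (0:ℝ)..a, s ^ (1 - θ) / (1 + s * n / t))
          + (∫ s in a..lam1, s ^ (1 - θ) / (1 + s * n / t))
        ≤ a ^ (2-θ) / (2-θ) + a ^ (2-θ) / (θ-1) :=
          add_le_add (hv1 ▸ h1) (le_trans h2 hv2)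
      _ = (1/(2-θ) + 1/(θ-1)) * a ^ (2-θ) := by ring
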